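/- arXiv:1601.00685 — 4 statements merged into one kernel-verified Lean document; each statement's English description precedes it below -/
import Mathlib

section
/- Let Φ be a simply laced, irreducible root system with base Δ and set of positive roots Φ⁺. Let β, γ ∈ Φ⁺ be positive roots such that γ − β = α₁ + ⋯ + α_t, where each αᵢ ∈ Δ (repetitions allowed) and t ≥ 0. Then there exist positive roots β = β₀, β₁, …, β_t = γ such that β_{j} − β_{j−1} ∈ Δ for all j = 1, …, t. -/
open scoped RealInnerProductSpace

/-- A simply laced, irreducible (finite, reduced, crystallographic) root system `Φ`
in a real inner product space, together with a base `Δ` of simple roots. -/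
structure IsSimplyLacedIrreducibleRootSystem
    {V : Type*} [NormedAddCommGroup V] [InnerProductSpace ℝ V]
    (Φ : Set V) (Δ : Finset V) : Prop where
  finite : Φ.Finite
  nonempty : Φ.Nonempty
  ne_zero : ∀ α ∈ Φ, α ≠ 0
  reduced : ∀ α ∈ Φ, ∀ t : ℝ, t • α ∈ Φ → t = 1 ∨ t = -1
  crystallographic : ∀ α ∈ Φ, ∀ β ∈ Φ, ∃ n : ℤ, (n : ℝ) = 2 * ⟪β, α⟫ / ⟪α, α⟫
  reflect_mem : ∀ α ∈ Φ, ∀ β ∈ Φ, β - (2 * ⟪β, α⟫ / ⟪α, α⟫) • α ∈ Φ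
  base_subset : ↑Δ ⊆ Φ
  base_indep : LinearIndependent ℝ (fun a : Δ => (a : V))
  base_pos_or_neg : ∀ β ∈ Φ,
    (∃ m : Multiset V, (∀ a ∈ m, a ∈ Δ) ∧ β = m.sum) ∨
    (∃ m : Multiset V, (∀ a ∈ m, a ∈ Δ) ∧ -β = m.sum)
  simplyLaced : ∀ α ∈ Φ, ∀ β ∈ Φ, ⟪α, α⟫ = ⟪β, β⟫
  irreducible : ∀ A B : Set V, Φ = A ∪ B → (∀ a ∈ A, ∀ b ∈ B, ⟪a, b⟫ = 0) →
    A = ∅ ∨ B = ∅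

/-- `x` is a positive root: it is a root which is a sum of simple roots
(with nonnegative integer multiplicities, encoded by a multiset of elements of `Δ`). -/
def IsPositiveRoot {V : Type*} [NormedAddCommGroup V] [InnerProductSpace ℝ V]
    (Φ : Set V) (Δ : Finset V) (x : V) : Prop :=
  x ∈ Φ ∧ ∃ m : Multiset V, (∀ a ∈ m, a ∈ Δ) ∧ x = m.sum

/-! Induction on `t`. The difference `γ - β = ∑ αᵢ` is nonzero (a linear form equal to `1` on
`Δ` takes the value `t` on it), so `0 < ⟪γ - β, γ - β⟫ = ∑ ⟪γ - β, αᵢ⟫` yields an `i` with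
`⟪γ, αᵢ⟫ > 0` or `⟪β, αᵢ⟫ < 0`. In a simply laced system this makes `γ - αᵢ`, resp. `β + αᵢ`, a
root, and it is positive since it still differs from `β`, resp. `γ`, by a sum of simple roots.
The induction hypothesis gives a chain from `β` to `γ - αᵢ`, resp. from `β + αᵢ` to `γ`, which is
extended by one step. -/

theorem LinearIndepOn.exists_linearMap_eq_one {K V : Type*} [Field K] [AddCommGroup V]
    [Module K V] {s : Set V} (hs : LinearIndepOn K id s) :
    ∃ f : V →ₗ[K] K, ∀ a ∈ s, f a = 1 := by
  let b := Module.Basis.extend hs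
  refine ⟨b.sumCoords, fun a ha => ?_⟩
  simpa [b, Module.Basis.extend_apply_self] using
    b.sumCoords_self_apply (i := ⟨a, hs.subset_extend _ ha⟩)

theorem eq_zero_or_one_le_of_mem_closure {V : Type*} [AddCommGroup V] [Module ℝ V] {s : Set V}
    {f : V →ₗ[ℝ] ℝ} (hf : ∀ a ∈ s, f a = 1) {x : V}
    (hx : x ∈ AddSubmonoid.closure s) : x = 0 ∨ 1 ≤ f x := by
  induction hx using AddSubmonoid.closure_induction with
  | mem a ha => exact .inr (hf a ha).ge
  | zero => exact .inl rfl
  | add x y _ _ hx hy =>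
    rcases hx with rfl | hx
    · simpa using hy
    rcases hy with rfl | hy
    · simpa using Or.inr hx
    · right; rw [map_add]; linarith

theorem exists_inner_pos_of_eq_sum {E ι : Type*} [NormedAddCommGroup E] [InnerProductSpace ℝ E]
    {s : Finset ι} {v : E} {w : ι → E} (hv : v = ∑ i ∈ s, w i) (hv0 : v ≠ 0) :
    ∃ i ∈ s, 0 < ⟪v, w i⟫ := by
  by_contra! h
  have : ⟪v, v⟫ ≤ 0 := by
    calc ⟪v, v⟫ = ∑ i ∈ s, ⟪v, w i⟫ := by rw [← inner_sum, ← hv]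
      _ ≤ 0 := Finset.sum_nonpos h
  exact hv0 (real_inner_self_nonpos.mp this)

section

variable {V : Type*} [NormedAddCommGroup V] [InnerProductSpace ℝ V] {Φ : Set V} {Δ : Finset V}

theorem isPositiveRoot_iff_mem_closure {x : V} :
    IsPositiveRoot Φ Δ x ↔ x ∈ Φ ∧ x ∈ AddSubmonoid.closure (Δ : Set V) := by
  refine and_congr_right fun _ => ⟨?_, fun hx => ?_⟩
  · rintro ⟨m, hm, rfl⟩
    exact AddSubmonoid.multiset_sum_mem _ m fun a ha => AddSubmonoid.subset_closure (hm a ha)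
  · obtain ⟨m, hm, rfl⟩ := AddSubmonoid.exists_multiset_of_mem_closure hx
    exact ⟨m, hm, rfl⟩

def IsSimpleRootChain (Φ : Set V) (Δ : Finset V) {t : ℕ} (c : Fin (t + 1) → V) : Prop :=
  (∀ j, IsPositiveRoot Φ Δ (c j)) ∧ ∀ j : Fin t, c j.succ - c j.castSucc ∈ Δ

namespace IsSimpleRootChain

variable {t : ℕ} {c : Fin (t + 1) → V} {x : V}

theorem cons (hc : IsSimpleRootChain Φ Δ c) (hx : IsPositiveRoot Φ Δ x) (hxc : c 0 - x ∈ Δ) :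
    IsSimpleRootChain Φ Δ (Fin.cons x c : Fin (t + 2) → V) := by
  refine ⟨Fin.cases hx hc.1, Fin.cases ?_ fun j => ?_⟩
  · simpa using hxc
  · simpa [← Fin.succ_castSucc] using hc.2 j

theorem snoc (hc : IsSimpleRootChain Φ Δ c) (hx : IsPositiveRoot Φ Δ x)
    (hxc : x - c (Fin.last t) ∈ Δ) :
    IsSimpleRootChain Φ Δ (Fin.snoc c x : Fin (t + 2) → V) := by
  refine ⟨Fin.lastCases (by simpa using hx) fun j => by simpa using hc.1 j,
    Fin.lastCases ?_ fun j => ?_⟩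
  · simpa using hxc
  · rw [Fin.succ_castSucc, Fin.snoc_castSucc, Fin.snoc_castSucc]
    exact hc.2 j

end IsSimpleRootChain

namespace IsSimplyLacedIrreducibleRootSystem

variable (hRS : IsSimplyLacedIrreducibleRootSystem Φ Δ)
include hRS

theorem neg_mem {a : V} (ha : a ∈ Φ) : -a ∈ Φ := by
  have haa : ⟪a, a⟫ ≠ 0 := inner_self_ne_zero.mpr (hRS.ne_zero a ha)
  have h := hRS.reflect_mem a ha a ha
  rwa [mul_div_assoc, div_self haa, mul_one, two_smul, sub_add_cancel_left] at h

/-- In the simply laced case `⟪a, b⟫ > 0` forces `⟨a, b^∨⟩ = 1`, so the reflection of `a`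
in `b` is `a - b`. -/
theorem sub_mem_of_inner_pos {a b : V} (ha : a ∈ Φ) (hb : b ∈ Φ) (hab : a ≠ b)
    (hpos : 0 < ⟪a, b⟫) : a - b ∈ Φ := by
  obtain ⟨n, hn⟩ := hRS.crystallographic b hb a ha
  have hbb : 0 < ⟪b, b⟫ := real_inner_self_pos.mpr (hRS.ne_zero b hb)
  have hsub : 0 < ⟪a - b, a - b⟫ := real_inner_self_pos.mpr (sub_ne_zero.mpr hab)
  rw [real_inner_sub_sub_self, hRS.simplyLaced a ha b hb] at hsub
  have hn_pos : (0 : ℝ) < n := by rw [hn]; positivity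
  have hn_lt : (n : ℝ) < 2 := by rw [hn, div_lt_iff₀ hbb]; linarith
  have hn_one : n = 1 := by
    have : 0 < n := by exact_mod_cast hn_pos
    have : n < 2 := by exact_mod_cast hn_lt
    omega
  have h := hRS.reflect_mem b hb a ha
  rwa [← hn, hn_one, Int.cast_one, one_smul] at h

theorem add_mem_of_inner_neg {a b : V} (ha : a ∈ Φ) (hb : b ∈ Φ) (hab : a ≠ -b)
    (hneg : ⟪a, b⟫ < 0) : a + b ∈ Φ := by
  simpa using hRS.sub_mem_of_inner_pos ha (hRS.neg_mem hb) hab (by simpa using hneg)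

theorem exists_linearMap_eq_one_on_base : ∃ f : V →ₗ[ℝ] ℝ, ∀ a ∈ (Δ : Set V), f a = 1 :=
  LinearIndepOn.exists_linearMap_eq_one hRS.base_indep

theorem isPositiveRoot_sub_or_add {β γ a S : V} (hβ : IsPositiveRoot Φ Δ β)
    (hγ : IsPositiveRoot Φ Δ γ) (ha : a ∈ Δ) (hS : S ∈ AddSubmonoid.closure (Δ : Set V))
    (hsum : γ - β = a + S) (hpos : 0 < ⟪γ - β, a⟫) :
    IsPositiveRoot Φ Δ (γ - a) ∨ IsPositiveRoot Φ Δ (β + a) := by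
  simp only [isPositiveRoot_iff_mem_closure] at hβ hγ ⊢
  have haΦ : a ∈ Φ := hRS.base_subset ha
  obtain ⟨f, hf⟩ := hRS.exists_linearMap_eq_one_on_base
  have hfβ : 1 ≤ f β :=
    (eq_zero_or_one_le_of_mem_closure hf hβ.2).resolve_left (hRS.ne_zero β hβ.1)
  have hfS : 0 ≤ f S := by
    rcases eq_zero_or_one_le_of_mem_closure hf hS with rfl | h
    · simp
    · linarith
  rw [inner_sub_left, sub_pos] at hpos
  by_cases hγa : 0 < ⟪γ, a⟫
  · have hγ_ne : γ ≠ a := by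
      rintro rfl
      have := congrArg f hsum
      simp only [map_sub, map_add] at this
      linarith
    have hγ_sub : γ - a = β + S := by
      rw [sub_eq_iff_eq_add.mp hsum]; abel
    exact .inl ⟨hRS.sub_mem_of_inner_pos hγ.1 haΦ hγ_ne hγa, hγ_sub ▸ add_mem hβ.2 hS⟩
  · have hβ_ne : β ≠ -a := by
      rintro rfl
      have := hf a ha
      simp only [map_neg] at hfβ
      linarith
    exact .inr ⟨hRS.add_mem_of_inner_neg hβ.1 haΦ hβ_ne (by linarith),
      add_mem hβ.2 (AddSubmonoid.subset_closure ha)⟩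

theorem exists_isPositiveRoot_sub_or_add {β γ : V} (hβ : IsPositiveRoot Φ Δ β)
    (hγ : IsPositiveRoot Φ Δ γ) {t : ℕ} (α : Fin (t + 1) → V) (hα : ∀ i, α i ∈ Δ)
    (hsum : γ - β = ∑ i, α i) :
    ∃ i, IsPositiveRoot Φ Δ (γ - α i) ∨ IsPositiveRoot Φ Δ (β + α i) := by
  obtain ⟨f, hf⟩ := hRS.exists_linearMap_eq_one_on_base
  have hne : γ - β ≠ 0 := by
    intro h
    have := congrArg f (hsum.symm.trans h)
    simp only [map_sum, hf _ (hα _), Finset.sum_const, Finset.card_univ, Fintype.card_fin,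
      nsmul_eq_mul, Nat.cast_add, Nat.cast_one, mul_one, map_zero] at this
    exact Nat.cast_add_one_ne_zero t this
  obtain ⟨i, -, hi⟩ := exists_inner_pos_of_eq_sum hsum hne
  refine ⟨i, hRS.isPositiveRoot_sub_or_add hβ hγ (hα i)
    (AddSubmonoid.sum_mem _ (t := Finset.univ) fun j _ =>
      AddSubmonoid.subset_closure (hα (i.succAbove j))) ?_ hi⟩
  rw [hsum, Fin.sum_univ_succAbove _ i]

end IsSimplyLacedIrreducibleRootSystem

end

/-- If `β, γ` are positive roots of a simply laced irreducible root system with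
`γ - β = α₁ + ⋯ + α_t` a sum of simple roots, then there is a chain of positive roots
`β = c₀, c₁, …, c_t = γ` with each consecutive difference a simple root. -/
theorem chain_of_positive_roots
    {V : Type*} [NormedAddCommGroup V] [InnerProductSpace ℝ V]
    {Φ : Set V} {Δ : Finset V}
    (hRS : IsSimplyLacedIrreducibleRootSystem Φ Δ)
    {β γ : V} (hβ : IsPositiveRoot Φ Δ β) (hγ : IsPositiveRoot Φ Δ γ)
    {t : ℕ} (α : Fin t → V) (hα : ∀ i, α i ∈ Δ)
    (hsum : γ - β = ∑ i, α i) :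
    ∃ c : Fin (t + 1) → V,
      c 0 = β ∧ c (Fin.last t) = γ ∧
      (∀ j, IsPositiveRoot Φ Δ (c j)) ∧
      (∀ j : Fin t, c j.succ - c j.castSucc ∈ Δ) := by
  induction t generalizing β γ with
  | zero => exact ⟨fun _ => β, rfl, (sub_eq_zero.mp (by simpa using hsum)).symm, fun _ => hβ,
      Fin.elim0⟩
  | succ t ih =>
    obtain ⟨i, hi⟩ := hRS.exists_isPositiveRoot_sub_or_add hβ hγ α hα hsum
    have hrest : γ - β - α i = ∑ j, α (i.succAbove j) := by
      rw [hsum, Fin.sum_univ_succAbove _ i, add_sub_cancel_left]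
    rcases hi with hsub | hadd
    · obtain ⟨c, hc0, hcl, hc⟩ := ih hβ hsub (fun j => α (i.succAbove j)) (fun j => hα _)
        (by rw [sub_right_comm, hrest])
      refine ⟨Fin.snoc c γ, by simpa using hc0, by simp, IsSimpleRootChain.snoc hc hγ ?_⟩
      simpa [hcl] using hα i
    · obtain ⟨c, hc0, hcl, hc⟩ := ih hadd hγ (fun j => α (i.succAbove j)) (fun j => hα _)
        (by rw [← sub_sub, hrest])
      refine ⟨Fin.cons β c, rfl, by simpa using hcl, IsSimpleRootChain.cons hc hβ ?_⟩
      simpa [hc0] using hα i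
end

section
/- Let Φ be a simply laced, irreducible root system with base Δ = {α₁, …, α_r}, positive roots Φ⁺, and highest root θ = n₁α₁ + ⋯ + n_rα_r of height N = n₁ + ⋯ + n_r. Then there exists a sequence 0 = Z₀, Z₁, …, Z_N = θ of elements of the root lattice such that: (a) Z_j − Z_{j−1} ∈ Δ for every j = 1, …, N; (b) Z_j is a positive root for every j = 1, …, N; (c) Z_r = α₁ + ⋯ + α_r is the sum of all simple roots; and (d) ⟨Z_j, αᵢ^∨⟩ ≥ −1 for all i = 1, …, r and j = 1, …, N. -/
/-!
In a simply laced system, if `β` is a root or zero and `α` a root with `⟪β, α⟫ > 0`, then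
`β - α` is again a root or zero (and `β + α` is one when `⟪β, α⟫ < 0`). If `x` and `y = x + σ`
lie in `Φ ∪ {0}` with `σ ≠ 0` a sum of simple roots, then `0 < ⟪σ, σ⟫ = ⟪y, σ⟫ - ⟪x, σ⟫`, so
either `x` can be raised or `y` lowered by a simple root occurring in `σ`; iterating joins `x`
to `y` by simple steps through `Φ ∪ {0}`. Such a chain starting at `0` never passes between
two mutually orthogonal parts of `Δ`, because `u + a` with `⟪u, a⟫ = 0` is too long to be a
root; by irreducibility `Δ` is connected, so the sum of all simple roots is a root. As every
coefficient of `θ` is at least `1`, the chain is `0 → ∑ Δ → θ`. Its points after `0` are nonzero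
sums of simple roots, hence positive roots, and a positive root `x ≠ -α` has `⟨x, α^∨⟩ ≥ -1`.
-/

open scoped RealInnerProductSpace

section StepChain

variable {M : Type*} {Z₁ Z₂ : ℕ → M} {k : ℕ}

def concatChain (Z₁ : ℕ → M) (k : ℕ) (Z₂ : ℕ → M) : ℕ → M :=
  fun j => if j ≤ k then Z₁ j else Z₂ (j - k)

lemma concatChain_of_le {j : ℕ} (hj : j ≤ k) : concatChain Z₁ k Z₂ j = Z₁ j := if_pos hj

lemma concatChain_add (h : Z₁ k = Z₂ 0) (l : ℕ) : concatChain Z₁ k Z₂ (k + l) = Z₂ l := by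
  rcases Nat.eq_zero_or_pos l with rfl | hl
  · simpa [concatChain] using h
  · simp [concatChain, hl.ne']

variable [AddCommGroup M] {S P : Set M} {Z : ℕ → M} {l : ℕ}

def IsStepChain (S P : Set M) (Z : ℕ → M) (k : ℕ) : Prop :=
  (∀ j < k, Z (j + 1) - Z j ∈ S) ∧ ∀ j ≤ k, Z j ∈ P

lemma isStepChain_const {x : M} (hx : x ∈ P) : IsStepChain S P (fun _ => x) 0 :=
  ⟨by omega, fun _ _ => hx⟩

lemma isStepChain_pair {x y : M} (hx : x ∈ P) (hy : y ∈ P) (hxy : y - x ∈ S) :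
    IsStepChain S P (fun j => if j = 0 then x else y) 1 := by
  refine ⟨fun j hj => ?_, fun j _ => ?_⟩
  · obtain rfl : j = 0 := by omega
    simpa using hxy
  · dsimp only
    split_ifs <;> assumption

lemma IsStepChain.concat (h₁ : IsStepChain S P Z₁ k) (h₂ : IsStepChain S P Z₂ l)
    (h : Z₁ k = Z₂ 0) : IsStepChain S P (concatChain Z₁ k Z₂) (k + l) := by
  refine ⟨fun j hj => ?_, fun j hj => ?_⟩
  · rcases lt_or_ge j k with hjk | hjk
    · rw [concatChain_of_le hjk, concatChain_of_le hjk.le]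
      exact h₁.1 j hjk
    · obtain ⟨i, rfl⟩ := Nat.exists_eq_add_of_le hjk
      rw [add_assoc, concatChain_add h, concatChain_add h]
      exact h₂.1 i (by omega)
  · rcases le_or_gt j k with hjk | hjk
    · rw [concatChain_of_le hjk]
      exact h₁.2 j hjk
    · obtain ⟨i, rfl⟩ := Nat.exists_eq_add_of_le hjk.le
      rw [concatChain_add h]
      exact h₂.2 i (by omega)

lemma IsStepChain.exists_multiset_sum (hZ : IsStepChain S P Z k) {j : ℕ} (hj : j ≤ k) :
    ∃ m : Multiset M, (∀ a ∈ m, a ∈ S) ∧ Multiset.card m = j ∧ Z j = Z 0 + m.sum := by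
  induction j with
  | zero => exact ⟨0, by simp, rfl, by simp⟩
  | succ j ih =>
    obtain ⟨m, hmS, hcard, hsum⟩ := ih (by omega)
    refine ⟨(Z (j + 1) - Z j) ::ₘ m, ?_, by simp [hcard], ?_⟩
    · simpa [or_imp, forall_and] using ⟨hZ.1 j hj, hmS⟩
    · rw [Multiset.sum_cons, ← add_assoc, add_comm (Z 0), add_assoc, ← hsum]
      abel

end StepChain

lemma real_inner_lt_inner_self_of_ne {V : Type*} [NormedAddCommGroup V] [InnerProductSpace ℝ V]
    {α β : V} (hlen : ⟪β, β⟫ = ⟪α, α⟫) (hne : β ≠ α) : ⟪β, α⟫ < ⟪α, α⟫ := by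
  have := real_inner_self_pos.2 (sub_ne_zero.2 hne)
  rw [real_inner_sub_sub_self] at this
  linarith

lemma Multiset.exists_mem_inner_pos {V : Type*} [NormedAddCommGroup V] [InnerProductSpace ℝ V]
    {v : V} {m : Multiset V} (h : 0 < ⟪v, m.sum⟫) : ∃ a ∈ m, 0 < ⟪v, a⟫ := by
  induction m using Multiset.induction_on with
  | empty => simp at h
  | cons b m ih =>
    rw [Multiset.sum_cons, inner_add_right] at h
    rcases lt_or_ge 0 ⟪v, b⟫ with hb | hb
    · exact ⟨b, Multiset.mem_cons_self b m, hb⟩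
    · obtain ⟨a, ha, hva⟩ := ih (by linarith)
      exact ⟨a, Multiset.mem_cons_of_mem ha, hva⟩

namespace IsSimplyLacedIrreducibleRootSystem

variable {V : Type*} [NormedAddCommGroup V] [InnerProductSpace ℝ V] {Φ : Set V} {Δ : Finset V}
  (hRS : IsSimplyLacedIrreducibleRootSystem Φ Δ) {α β : V}
include hRS

lemma inner_self_pos (hα : α ∈ Φ) : 0 < ⟪α, α⟫ :=
  real_inner_self_pos.2 (hRS.ne_zero α hα)

lemma neg_mem_s3 (hα : α ∈ Φ) : -α ∈ Φ := by
  have := hRS.reflect_mem α hα α hα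
  rwa [mul_div_cancel_right₀ _ (hRS.inner_self_pos hα).ne', two_smul, sub_add_cancel_left] at this

lemma cartan_le_one (hα : α ∈ Φ) (hβ : β ∈ Φ) (hne : β ≠ α) :
    2 * ⟪β, α⟫ / ⟪α, α⟫ ≤ 1 := by
  obtain ⟨k, hk⟩ := hRS.crystallographic α hα β hβ
  have hlt := real_inner_lt_inner_self_of_ne (hRS.simplyLaced α hα β hβ).symm hne
  have : (k : ℝ) < 2 := by
    rw [hk, div_lt_iff₀ (hRS.inner_self_pos hα)]
    linarith
  have : k ≤ 1 := by
    have : k < 2 := by exact_mod_cast this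
    omega
  rw [← hk]
  exact_mod_cast this

lemma neg_one_le_cartan (hα : α ∈ Φ) (hβ : β ∈ Φ) (hne : β ≠ -α) :
    -1 ≤ 2 * ⟪β, α⟫ / ⟪α, α⟫ := by
  have := hRS.cartan_le_one hα (hRS.neg_mem_s3 hβ) fun h => hne (by rw [← h, neg_neg])
  rw [inner_neg_left, mul_neg, neg_div] at this
  linarith

lemma cartan_eq_one (hα : α ∈ Φ) (hβ : β ∈ Φ) (hne : β ≠ α) (h : 0 < ⟪β, α⟫) :
    2 * ⟪β, α⟫ / ⟪α, α⟫ = 1 := by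
  obtain ⟨k, hk⟩ := hRS.crystallographic α hα β hβ
  have hpos : (0 : ℝ) < k := hk ▸ div_pos (by linarith) (hRS.inner_self_pos hα)
  have hle : (k : ℝ) ≤ 1 := hk ▸ hRS.cartan_le_one hα hβ hne
  have : k = 1 := by
    have : 0 < k := by exact_mod_cast hpos
    have : k ≤ 1 := by exact_mod_cast hle
    omega
  rw [← hk, this, Int.cast_one]

lemma neg_mem_insert_zero (hβ : β ∈ insert 0 Φ) : -β ∈ insert 0 Φ := by
  rcases hβ with rfl | hβ
  · simp
  · exact Or.inr (hRS.neg_mem_s3 hβ)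

lemma sub_mem_of_inner_pos_s3 (hα : α ∈ Φ) (hβ : β ∈ insert 0 Φ) (h : 0 < ⟪β, α⟫) :
    β - α ∈ insert 0 Φ := by
  rcases hβ with rfl | hβ
  · simp at h
  by_cases hne : β = α
  · simp [hne]
  have := hRS.reflect_mem α hα β hβ
  rw [hRS.cartan_eq_one hα hβ hne h, one_smul] at this
  exact Or.inr this

lemma add_mem_of_inner_neg_s3 (hα : α ∈ Φ) (hβ : β ∈ insert 0 Φ) (h : ⟪β, α⟫ < 0) :
    β + α ∈ insert 0 Φ := by
  have := hRS.neg_mem_insert_zero <| hRS.sub_mem_of_inner_pos_s3 hα (hRS.neg_mem_insert_zero hβ)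
    (by rw [inner_neg_left]; linarith)
  rwa [neg_sub, sub_neg_eq_add, add_comm] at this

lemma add_notMem_of_inner_eq_zero (hα : α ∈ Φ) (hβ : β ∈ Φ) (h : ⟪β, α⟫ = 0) :
    β + α ∉ Φ := by
  intro hmem
  have h1 := hRS.simplyLaced α hα β hβ
  have h2 := hRS.simplyLaced α hα _ hmem
  have := hRS.inner_self_pos hα
  rw [real_inner_add_add_self, h] at h2
  linarith

lemma multiset_sum_injective {m m' : Multiset V} (hm : ∀ a ∈ m, a ∈ Δ) (hm' : ∀ a ∈ m', a ∈ Δ)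
    (h : m.sum = m'.sum) : m = m' := by
  classical
  have hsum : ∀ {m : Multiset V}, (∀ a ∈ m, a ∈ Δ) →
      m.sum = ∑ a ∈ Δ, (m.count a : ℝ) • a := fun {m} hm => by
    simp_rw [Nat.cast_smul_eq_nsmul]
    exact Finset.sum_multiset_count_of_subset m Δ fun a ha => hm a (Multiset.mem_toFinset.1 ha)
  have hcount := linearIndepOn_finset_iffₛ.1
    (show LinearIndepOn ℝ id (Δ : Set V) from hRS.base_indep) _ _
    ((hsum hm).symm.trans (h.trans (hsum hm')))
  ext a
  by_cases ha : a ∈ Δ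
  · exact_mod_cast hcount a ha
  · rw [Multiset.count_eq_zero_of_notMem (fun h => ha (hm a h)),
      Multiset.count_eq_zero_of_notMem (fun h => ha (hm' a h))]

lemma multiset_sum_ne_zero {m : Multiset V} (hm : ∀ a ∈ m, a ∈ Δ) (h : m ≠ 0) : m.sum ≠ 0 :=
  fun h0 => h (hRS.multiset_sum_injective hm (by simp) (h0.trans Multiset.sum_zero.symm))

lemma eq_of_sub_eq_multiset_sum {a b : V} (ha : a ∈ Δ) (hb : b ∈ Δ) {m : Multiset V}
    (hm : ∀ c ∈ m, c ∈ Δ) (h : a - b = m.sum) : a = b := by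
  have : {a} = b ::ₘ m := hRS.multiset_sum_injective (by simpa using ha)
    (by simpa [or_imp, forall_and] using ⟨hb, hm⟩) (by simp [← h])
  have : b ∈ ({a} : Multiset V) := this ▸ Multiset.mem_cons_self b m
  exact (Multiset.mem_singleton.1 this).symm

lemma inner_nonpos_of_mem_base {a b : V} (ha : a ∈ Δ) (hb : b ∈ Δ) (hne : a ≠ b) :
    ⟪a, b⟫ ≤ 0 := by
  by_contra! h
  rcases hRS.sub_mem_of_inner_pos_s3 (hRS.base_subset hb) (Or.inr (hRS.base_subset ha)) h
    with h0 | hmem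
  · exact hne (sub_eq_zero.1 h0)
  rcases hRS.base_pos_or_neg _ hmem with ⟨m, hm, hsum⟩ | ⟨m, hm, hsum⟩
  · exact hne (hRS.eq_of_sub_eq_multiset_sum ha hb hm hsum)
  · exact hne (hRS.eq_of_sub_eq_multiset_sum hb ha hm (by rw [← hsum, neg_sub])).symm

theorem exists_isStepChain [DecidableEq V] {m : Multiset V} (hm : ∀ a ∈ m, a ∈ Δ) {x : V}
    (hx : x ∈ insert 0 Φ) (hxm : x + m.sum ∈ insert 0 Φ) :
    ∃ Z : ℕ → V, Z 0 = x ∧ Z (Multiset.card m) = x + m.sum ∧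
      IsStepChain Δ (insert 0 Φ) Z (Multiset.card m) := by
  induction hk : Multiset.card m generalizing m x with
  | zero =>
    obtain rfl := Multiset.card_eq_zero.1 hk
    exact ⟨fun _ => x, rfl, by simp, isStepChain_const hx⟩
  | succ k ih =>
    have hpos : 0 < ⟪m.sum, m.sum⟫ :=
      real_inner_self_pos.2 (hRS.multiset_sum_ne_zero hm (Multiset.card_pos.1 (by omega)))
    have herase : ∀ {a}, a ∈ m → Multiset.card (m.erase a) = k := fun ha => by
      rw [Multiset.card_erase_of_mem ha, hk, Nat.pred_succ]
    have hsum : ∀ {a}, a ∈ m → m.sum = a + (m.erase a).sum := fun ha => by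
      rw [← Multiset.sum_cons, Multiset.cons_erase ha]
    -- `0 < ⟪m.sum, m.sum⟫ = ⟪x + m.sum, m.sum⟫ - ⟪x, m.sum⟫`: raise `x` or lower `x + m.sum`.
    rcases lt_or_ge ⟪x, m.sum⟫ 0 with hneg | hnonneg
    · obtain ⟨a, ham, hxa⟩ := Multiset.exists_mem_inner_pos (v := -x)
        (by rw [inner_neg_left]; linarith)
      rw [inner_neg_left, neg_pos] at hxa
      have hxa' := hRS.add_mem_of_inner_neg_s3 (hRS.base_subset (hm a ham)) hx hxa
      obtain ⟨Z, hZ0, hZk, hZ⟩ := ih (fun b hb => hm b (Multiset.mem_of_mem_erase hb)) hxa'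
        (by rwa [add_assoc, ← hsum ham]) (herase ham)
      refine ⟨concatChain (fun j => if j = 0 then x else x + a) 1 Z, rfl, ?_, ?_⟩
      · rw [add_comm k, concatChain_add (by simp [hZ0]), hZk, add_assoc, ← hsum ham]
      · rw [add_comm k]
        exact (isStepChain_pair hx hxa' (by simpa using hm a ham)).concat hZ (by simp [hZ0])
    · obtain ⟨a, ham, hya⟩ := Multiset.exists_mem_inner_pos (v := x + m.sum)
        (by rw [inner_add_left]; linarith)
      have hya' := hRS.sub_mem_of_inner_pos_s3 (hRS.base_subset (hm a ham)) hxm hya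
      have hxa : x + (m.erase a).sum = x + m.sum - a := by rw [hsum ham]; abel
      obtain ⟨Z, hZ0, hZk, hZ⟩ := ih (fun b hb => hm b (Multiset.mem_of_mem_erase hb)) hx
        (hxa ▸ hya') (herase ham)
      rw [hxa] at hZk
      refine ⟨concatChain Z k (fun j => if j = 0 then x + m.sum - a else x + m.sum),
        by rw [concatChain_of_le k.zero_le, hZ0], concatChain_add (by simp [hZk]) 1, ?_⟩
      exact hZ.concat (isStepChain_pair hya' hxm (by simpa using hm a ham)) (by simp [hZk])

section Irreducible

open Submodule

lemma add_mem_span_or_mem_span {S T : Set V} (hST : ∀ s ∈ S, ∀ t ∈ T, ⟪s, t⟫ = 0)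
    (hT : T ⊆ Φ) {u a : V} (hu : u ∈ insert 0 Φ) (hua : u + a ∈ insert 0 Φ)
    (huS : u ∈ span ℝ S) (ha : a ∈ S ∪ T) : u + a ∈ span ℝ S ∨ u + a ∈ span ℝ T := by
  rcases ha with haS | haT
  · exact Or.inl (add_mem huS (subset_span haS))
  rcases hu with rfl | hu
  · simpa using Or.inr (subset_span haT)
  rcases hua with h0 | hmem
  · exact Or.inl (h0 ▸ zero_mem _)
  have horth : ⟪u, a⟫ = 0 := (isOrtho_span.2 fun s hs t ht => hST s hs t ht).inner_eq huS
    (subset_span haT)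
  exact absurd hmem (hRS.add_notMem_of_inner_eq_zero (hT haT) hu horth)

lemma mem_span_or_mem_span_of_isStepChain {S T : Set V} (hST : ∀ s ∈ S, ∀ t ∈ T, ⟪s, t⟫ = 0)
    (hS : S ⊆ Φ) (hT : T ⊆ Φ) {Z : ℕ → V} {k : ℕ} (hZ : IsStepChain (S ∪ T) (insert 0 Φ) Z k)
    (hZ0 : Z 0 = 0) {j : ℕ} (hj : j ≤ k) : Z j ∈ span ℝ S ∨ Z j ∈ span ℝ T := by
  induction j with
  | zero => simp [hZ0]
  | succ j ih =>
    have hstep := hZ.1 j hj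
    have hZj := hZ.2 j (by omega)
    have hZj' : Z j + (Z (j + 1) - Z j) ∈ insert 0 Φ := by simpa using hZ.2 _ hj
    have hTS : ∀ t ∈ T, ∀ s ∈ S, ⟪t, s⟫ = 0 := fun t ht s hs => by
      rw [real_inner_comm]; exact hST s hs t ht
    rw [← add_sub_cancel (Z j) (Z (j + 1))]
    rcases ih (by omega) with hS' | hT'
    · exact hRS.add_mem_span_or_mem_span hST hT hZj hZj' hS' hstep
    · exact (hRS.add_mem_span_or_mem_span hTS hS hZj hZj' hT' (Set.union_comm S T ▸ hstep)).symm

lemma mem_span_or_mem_span {S T : Set V} (hST : ∀ s ∈ S, ∀ t ∈ T, ⟪s, t⟫ = 0)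
    (hΔ : (Δ : Set V) = S ∪ T) (hβ : β ∈ Φ) : β ∈ span ℝ S ∨ β ∈ span ℝ T := by
  classical
  have hS : S ⊆ Φ := (Set.subset_union_left.trans hΔ.symm.subset).trans hRS.base_subset
  have hT : T ⊆ Φ := (Set.subset_union_right.trans hΔ.symm.subset).trans hRS.base_subset
  have key : ∀ m : Multiset V, (∀ a ∈ m, a ∈ Δ) → m.sum ∈ Φ →
      m.sum ∈ span ℝ S ∨ m.sum ∈ span ℝ T := fun m hm hmΦ => by
    obtain ⟨Z, hZ0, hZk, hZ⟩ := hRS.exists_isStepChain hm (x := 0) (Or.inl rfl)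
      (by simpa using Or.inr hmΦ)
    rw [hΔ] at hZ
    simpa [hZk] using hRS.mem_span_or_mem_span_of_isStepChain hST hS hT hZ hZ0 le_rfl
  rcases hRS.base_pos_or_neg β hβ with ⟨m, hm, hsum⟩ | ⟨m, hm, hsum⟩
  · exact hsum ▸ key m hm (hsum ▸ hβ)
  · simpa [← hsum, Submodule.neg_mem_iff] using key m hm (hsum ▸ hRS.neg_mem_s3 hβ)

lemma exists_inner_ne_zero [DecidableEq V] {S : Finset V} (hS : S ⊆ Δ) (hSne : S.Nonempty)
    (hSΔ : S ≠ Δ) : ∃ a ∈ S, ∃ b ∈ Δ \ S, ⟪a, b⟫ ≠ 0 := by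
  by_contra! horth
  obtain ⟨a, ha⟩ := hSne
  obtain ⟨b, hb⟩ : (Δ \ S).Nonempty :=
    Finset.sdiff_nonempty.2 fun h => hSΔ (subset_antisymm hS h)
  have hΔ : (Δ : Set V) = ↑S ∪ ↑(Δ \ S) := by
    rw [← Finset.coe_union, Finset.union_sdiff_of_subset hS]
  let A : Set V := {β ∈ Φ | β ∈ span ℝ S}
  let B : Set V := {β ∈ Φ | β ∈ span ℝ ↑(Δ \ S)}
  have hAB : Φ = A ∪ B := Set.ext fun β =>
    ⟨fun hβ => (hRS.mem_span_or_mem_span horth hΔ hβ).imp (⟨hβ, ·⟩) (⟨hβ, ·⟩),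
      fun hβ => hβ.elim (·.1) (·.1)⟩
  have hortho : ∀ u ∈ A, ∀ w ∈ B, ⟪u, w⟫ = 0 := fun u hu w hw =>
    (isOrtho_span.2 fun s hs t ht => horth s hs t ht).inner_eq hu.2 hw.2
  rcases hRS.irreducible A B hAB hortho with h | h
  · exact h.subset ⟨hRS.base_subset (hS ha), subset_span ha⟩
  · exact h.subset ⟨hRS.base_subset (Finset.mem_sdiff.1 hb).1, subset_span hb⟩

end Irreducible

lemma base_nonempty : Δ.Nonempty := by
  obtain ⟨β, hβ⟩ := hRS.nonempty
  by_contra hΔ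
  have hsum_zero : ∀ m : Multiset V, (∀ a ∈ m, a ∈ Δ) → m.sum = 0 := fun m hm => by
    rw [Multiset.eq_zero_of_forall_notMem fun a ha => hΔ ⟨a, hm a ha⟩, Multiset.sum_zero]
  rcases hRS.base_pos_or_neg β hβ with ⟨m, hm, hsum⟩ | ⟨m, hm, hsum⟩
  · exact hRS.ne_zero β hβ (hsum.trans (hsum_zero m hm))
  · exact hRS.ne_zero β hβ (neg_eq_zero.1 (hsum.trans (hsum_zero m hm)))

lemma sum_insert_mem [DecidableEq V] {S : Finset V} (hSΔ : S ⊆ Δ) (hSΦ : ∑ c ∈ S, c ∈ Φ)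
    {a b : V} (ha : a ∈ S) (hb : b ∈ Δ) (hbS : b ∉ S) (hab : ⟪a, b⟫ ≠ 0) :
    ∑ c ∈ insert b S, c ∈ Φ := by
  have hne : ∀ {c}, c ∈ S → c ≠ b := fun hc h => hbS (h ▸ hc)
  have hneg : ⟪∑ c ∈ S, c, b⟫ < 0 := by
    rw [sum_inner]
    exact Finset.sum_neg' (fun c hc => hRS.inner_nonpos_of_mem_base (hSΔ hc) hb (hne hc))
      ⟨a, ha, (hRS.inner_nonpos_of_mem_base (hSΔ ha) hb (hne ha)).lt_of_ne hab⟩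
  have hsum : ∑ c ∈ insert b S, c = ∑ c ∈ S, c + b := by
    rw [Finset.sum_insert hbS, add_comm]
  rcases hRS.add_mem_of_inner_neg_s3 (hRS.base_subset hb) (Or.inr hSΦ) hneg with h0 | h
  · refine absurd ?_ (hRS.multiset_sum_ne_zero (m := (insert b S).val)
      (fun c hc => Finset.insert_subset hb hSΔ hc)
      fun h => Finset.insert_ne_empty b S (Finset.val_eq_zero.1 h))
    rw [Finset.sum_val, ← h0, ← hsum]
    rfl
  · rwa [hsum]

theorem sum_base_mem : ∑ a ∈ Δ, a ∈ Φ := by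
  classical
  obtain ⟨a₀, ha₀⟩ := hRS.base_nonempty
  set F := Δ.powerset.filter fun S => S.Nonempty ∧ ∑ a ∈ S, a ∈ Φ
  obtain ⟨S, hSF, hmax⟩ := F.exists_max_image Finset.card
    ⟨{a₀}, by simp [F, ha₀, hRS.base_subset ha₀]⟩
  simp only [F, Finset.mem_filter, Finset.mem_powerset] at hSF hmax
  obtain ⟨hSΔ, hSne, hSΦ⟩ := hSF
  by_contra hΔ
  obtain ⟨a, ha, b, hb, hab⟩ := hRS.exists_inner_ne_zero hSΔ hSne (by rintro rfl; exact hΔ hSΦ)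
  obtain ⟨hbΔ, hbS⟩ := Finset.mem_sdiff.1 hb
  have := hmax (insert b S) ⟨Finset.insert_subset hbΔ hSΔ, Finset.insert_nonempty b S,
    hRS.sum_insert_mem hSΔ hSΦ ha hbΔ hbS hab⟩
  rw [Finset.card_insert_of_notMem hbS] at this
  omega

lemma isPositiveRoot_of_isStepChain {Z : ℕ → V} {k j : ℕ}
    (hZ : IsStepChain Δ (insert 0 Φ) Z k) (hZ0 : Z 0 = 0) (hj : 1 ≤ j) (hjk : j ≤ k) :
    IsPositiveRoot Φ Δ (Z j) := by
  obtain ⟨m, hm, hcard, hZj⟩ := hZ.exists_multiset_sum hjk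
  rw [hZ0, zero_add] at hZj
  have hm0 : m ≠ 0 := by rintro rfl; simp at hcard; omega
  exact ⟨(hZ.2 j hjk).resolve_left (hZj ▸ hRS.multiset_sum_ne_zero hm hm0), m, hm, hZj⟩

lemma neg_one_le_cartan_of_isPositiveRoot {x a : V} (hx : IsPositiveRoot Φ Δ x) (ha : a ∈ Δ) :
    -1 ≤ 2 * ⟪x, a⟫ / ⟪a, a⟫ := by
  obtain ⟨hxΦ, m, hm, rfl⟩ := hx
  refine hRS.neg_one_le_cartan (hRS.base_subset ha) hxΦ fun h => ?_
  refine hRS.multiset_sum_ne_zero (m := a ::ₘ m) (by simpa [or_imp, forall_and] using ⟨ha, hm⟩)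
    (Multiset.cons_ne_zero) ?_
  rw [Multiset.sum_cons, h, add_neg_cancel]

lemma base_val_le {m : Multiset V} (hm : ∀ a ∈ m, a ∈ Δ)
    (h : ∀ a ∈ Δ, ∃ m' : Multiset V, (∀ b ∈ m', b ∈ Δ) ∧ m.sum - a = m'.sum) : Δ.val ≤ m := by
  rw [Multiset.le_iff_subset Δ.nodup]
  intro a ha
  obtain ⟨m', hm', hsum⟩ := h a ha
  have : m = a ::ₘ m' := hRS.multiset_sum_injective hm
    (by simpa [or_imp, forall_and] using ⟨ha, hm'⟩) (by rw [Multiset.sum_cons, ← hsum]; abel)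
  exact this ▸ Multiset.mem_cons_self a m'

theorem exists_isStepChain_through_sum_base [DecidableEq V] {m : Multiset V}
    (hm : ∀ a ∈ m, a ∈ Δ) (hle : Δ.val ≤ m) (hmΦ : m.sum ∈ Φ) :
    ∃ Z : ℕ → V, Z 0 = 0 ∧ Z Δ.card = ∑ a ∈ Δ, a ∧ Z (Multiset.card m) = m.sum ∧
      IsStepChain Δ (insert 0 Φ) Z (Multiset.card m) := by
  obtain ⟨m', rfl⟩ := Multiset.le_iff_exists_add.1 hle
  have hm' : ∀ a ∈ m', a ∈ Δ := fun a ha => hm a (Multiset.mem_add.2 (Or.inr ha))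
  obtain ⟨Z₁, hZ₁0, hZ₁r, hZ₁⟩ := hRS.exists_isStepChain (m := Δ.val) (x := 0) (fun _ => id)
    (Or.inl rfl) (by simpa using Or.inr hRS.sum_base_mem)
  obtain ⟨Z₂, hZ₂0, hZ₂k, hZ₂⟩ := hRS.exists_isStepChain hm' (x := ∑ a ∈ Δ, a)
    (Or.inr hRS.sum_base_mem) (by simpa [Multiset.sum_add] using Or.inr hmΦ)
  have hr : Multiset.card Δ.val = Δ.card := rfl
  rw [hr] at hZ₁r hZ₁
  rw [zero_add, Finset.sum_val] at hZ₁r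
  have hjoin : Z₁ Δ.card = Z₂ 0 := hZ₁r.trans hZ₂0.symm
  refine ⟨concatChain Z₁ Δ.card Z₂, by rw [concatChain_of_le (Nat.zero_le _), hZ₁0],
    by rw [concatChain_of_le le_rfl, hZ₁r]; rfl, ?_, ?_⟩
  · rw [Multiset.card_add, hr, concatChain_add hjoin, hZ₂k, Multiset.sum_add, Finset.sum_val]
    rfl
  · rw [Multiset.card_add, hr]
    exact hZ₁.concat hZ₂ hjoin

end IsSimplyLacedIrreducibleRootSystem

/-- Lemma 2.5 of the paper, root-theoretic form: let `θ = ∑_{a ∈ Δ} n a • a` be the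
highest root of a simply laced irreducible root system, of height `N = ∑_{a ∈ Δ} n a`.
Then there is a sequence `0 = Z 0, Z 1, …, Z N = θ` such that each consecutive
difference is a simple root, each `Z j` (for `1 ≤ j ≤ N`) is a positive root,
`Z r` (with `r = Δ.card`) is the sum of all simple roots, and `⟨Z j, α^∨⟩ ≥ -1`
for every simple root `α` and every `1 ≤ j ≤ N`. -/
theorem fundamental_cycle_sequence
    {V : Type*} [NormedAddCommGroup V] [InnerProductSpace ℝ V]
    {Φ : Set V} {Δ : Finset V}
    (hRS : IsSimplyLacedIrreducibleRootSystem Φ Δ)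
    (θ : V) (n : V → ℕ)
    (hθ : IsPositiveRoot Φ Δ θ)
    (hθsum : θ = ∑ a ∈ Δ, n a • a)
    (hhighest : ∀ β ∈ Φ, ∃ m : Multiset V, (∀ a ∈ m, a ∈ Δ) ∧ θ - β = m.sum)
    (N : ℕ) (hN : N = ∑ a ∈ Δ, n a) :
    ∃ Z : ℕ → V,
      Z 0 = 0 ∧ Z N = θ ∧
      (∀ j < N, Z (j + 1) - Z j ∈ Δ) ∧
      (∀ j, 1 ≤ j → j ≤ N → IsPositiveRoot Φ Δ (Z j)) ∧
      Z Δ.card = ∑ a ∈ Δ, a ∧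
      (∀ a ∈ Δ, ∀ j, 1 ≤ j → j ≤ N → -1 ≤ 2 * ⟪Z j, a⟫ / ⟪a, a⟫) := by
  classical
  set m := ∑ a ∈ Δ, Multiset.replicate (n a) a
  have hm : ∀ a ∈ m, a ∈ Δ := fun a ha => by
    obtain ⟨b, hb, hab⟩ := Multiset.mem_sum.1 ha
    rwa [Multiset.eq_of_mem_replicate hab]
  have hθm : θ = m.sum := by simp [m, Multiset.sum_sum, Multiset.sum_replicate, hθsum]
  have hNm : N = Multiset.card m := by simp [m, hN]
  have hle : Δ.val ≤ m := hRS.base_val_le hm fun a ha => hθm ▸ hhighest a (hRS.base_subset ha)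
  obtain ⟨Z, hZ0, hZr, hZN, hZ⟩ := hRS.exists_isStepChain_through_sum_base hm hle (hθm ▸ hθ.1)
  rw [← hNm, ← hθm] at hZN
  rw [← hNm] at hZ
  have hpos := fun j (hj : 1 ≤ j) (hjN : j ≤ N) => hRS.isPositiveRoot_of_isStepChain hZ hZ0 hj hjN
  exact ⟨Z, hZ0, hZN, hZ.1, hpos, hZr,
    fun a ha j hj hjN => hRS.neg_one_le_cartan_of_isPositiveRoot (hpos j hj hjN) ha⟩
end

section
/- For every integer n ≥ 0, the ideal π·Iⁿ equals I^{n+1} ∩ πA; that is, an element of I^{n+1} lying in the principal ideal (π) already lies in π·Iⁿ. -/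
/-!
Write `J = (π)` and `I = J + (f)`. Expanding `I^(n+1) = (J + (f))^(n+1)`, every term except
`(f^(n+1))` is divisible by `J`, so `I^(n+1) ⊆ J·Iⁿ + (f^(n+1))`. Intersecting with `J`
(modular law) leaves `(f^(n+1)) ∩ J`, and since `J` is prime and `f^(n+1) ∉ J`, that
intersection is `J·(f^(n+1)) ⊆ J·Iⁿ`.
-/

namespace Ideal

variable {A : Type*} [CommRing A]

theorem sup_pow_succ_le_mul_pow_sup (J K : Ideal A) (n : ℕ) :
    (J ⊔ K) ^ (n + 1) ≤ J * (J ⊔ K) ^ n ⊔ K ^ (n + 1) := by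
  induction n with
  | zero => simp
  | succ n ih =>
    calc (J ⊔ K) ^ (n + 2) = (J ⊔ K) * (J ⊔ K) ^ (n + 1) := pow_succ' _ _
      _ ≤ (J ⊔ K) * (J * (J ⊔ K) ^ n ⊔ K ^ (n + 1)) := mul_mono_right ih
      _ = J * (J ⊔ K) ^ (n + 1) ⊔ (J ⊔ K) * K ^ (n + 1) := by
        rw [mul_sup, mul_left_comm, ← pow_succ']
      _ = J * (J ⊔ K) ^ (n + 1) ⊔ J * K ^ (n + 1) ⊔ K ^ (n + 2) := by
        rw [sup_mul, ← pow_succ', sup_assoc]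
      _ ≤ J * (J ⊔ K) ^ (n + 1) ⊔ K ^ (n + 2) :=
        sup_le_sup_right (sup_le le_rfl (mul_mono_right (pow_right_mono le_sup_right _))) _

theorem IsPrime.inf_span_singleton_eq_mul {P : Ideal A} (hP : P.IsPrime) {g : A} (hg : g ∉ P) :
    P ⊓ span {g} = P * span {g} := by
  refine le_antisymm (fun x ⟨hxP, hxg⟩ => ?_) mul_le_inf
  obtain ⟨a, rfl⟩ := mem_span_singleton'.mp hxg
  exact mul_mem_mul ((hP.mem_or_mem hxP).resolve_right hg) (mem_span_singleton_self g)

end Ideal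

open Ideal in
/-- Let `A` be a commutative ring, `π ∈ A` such that `A/(π)` is an integral domain,
and `f ∈ A` with `f ∉ (π)`. Let `I = (π, f)`. Then for every `n ≥ 0`,
`π·Iⁿ = I^(n+1) ∩ (π)`: an element of `I^(n+1)` lying in the principal ideal `(π)`
already lies in `π·Iⁿ`. -/
theorem pi_mul_pow_eq_pow_inf_span
    {A : Type*} [CommRing A] (π f : A)
    (hdom : IsDomain (A ⧸ Ideal.span ({π} : Set A)))
    (hf : f ∉ Ideal.span ({π} : Set A))
    (I : Ideal A) (hI : I = Ideal.span ({π, f} : Set A)) :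
    ∀ n : ℕ, Ideal.span ({π} : Set A) * I ^ n = I ^ (n + 1) ⊓ Ideal.span ({π} : Set A) := by
  intro n
  set J := span ({π} : Set A)
  have hJ : J.IsPrime := (Quotient.isDomain_iff_prime J).mp hdom
  have hI_sup : I = J ⊔ span {f} := hI.trans (span_insert π {f})
  have hfI : span {f ^ (n + 1)} ≤ I ^ n := by
    rw [← span_singleton_pow, hI_sup]
    exact (pow_right_mono le_sup_right _).trans (pow_le_pow_right n.le_succ)
  refine le_antisymm (le_inf ?_ mul_le_left) ?_
  · rw [pow_succ']
    exact mul_mono_left (hI_sup ▸ le_sup_left)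
  calc I ^ (n + 1) ⊓ J ≤ (J * I ^ n ⊔ span {f} ^ (n + 1)) ⊓ J :=
        inf_le_inf_right _ (hI_sup ▸ sup_pow_succ_le_mul_pow_sup J (span {f}) n)
    _ = J * I ^ n ⊔ J * span {f ^ (n + 1)} := by
      rw [sup_inf_assoc_of_le _ mul_le_left, inf_comm, span_singleton_pow,
        hJ.inf_span_singleton_eq_mul fun h => hf (hJ.mem_of_pow_mem _ h)]
    _ ≤ J * I ^ n := sup_le le_rfl (mul_mono_right hfI)
end

section
/- Assume in addition that A is an integral domain and π ≠ 0. Let Ā = A/(π) and let Ī ⊆ Ā denote the image of I in Ā. Then for every integer n ≥ 1 the sequence 0 → I^{n−1}/Iⁿ → Iⁿ/I^{n+1} → Īⁿ/Ī^{n+1} → 0 is exact, where the first map is induced by multiplication by π and the second map is induced by reduction modulo (π). Explicitly: multiplication by π gives a well-defined injective A-module homomorphism I^{n−1}/Iⁿ → Iⁿ/I^{n+1}; the reduction map Iⁿ/I^{n+1} → Īⁿ/Ī^{n+1} is a well-defined surjection; and the kernel of the reduction map equals the image of multiplication by π. (Here I⁰ = A.) -/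
/-! The substance is the injectivity of multiplication by `π`: `π x ∈ I^(n+1)` forces `x ∈ Iⁿ`.
Since `I^(n+1) ⊆ π Iⁿ + (f^(n+1))`, write `π x = π u + c f^(n+1)` with `u ∈ Iⁿ`. As `f` is a
nonzerodivisor modulo `π`, so is `f^(n+1)`, whence `c = π d`; cancelling `π` gives
`x = u + d f^(n+1) ∈ Iⁿ`. Exactness in the middle follows by lifting an element of `Ī^(n+1)`
to `y ∈ I^(n+1)` and writing `x - y = π z`. -/

namespace Ideal

theorem sup_pow_succ_le_mul_sup_pow {R : Type*} [CommSemiring R] (P J : Ideal R) (n : ℕ) :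
    (P ⊔ J) ^ (n + 1) ≤ P * (P ⊔ J) ^ n ⊔ J ^ (n + 1) := by
  induction n with
  | zero => simp
  | succ n ih =>
    calc (P ⊔ J) ^ (n + 2) = (P ⊔ J) ^ (n + 1) * P ⊔ (P ⊔ J) ^ (n + 1) * J := by
          rw [pow_succ _ (n + 1), mul_sup]
      _ ≤ P * (P ⊔ J) ^ (n + 1) ⊔ (P * (P ⊔ J) ^ n ⊔ J ^ (n + 1)) * J :=
          sup_le_sup (le_of_eq (mul_comm _ _)) (mul_mono_left ih)
      _ ≤ P * (P ⊔ J) ^ (n + 1) ⊔ J ^ (n + 2) := by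
          rw [sup_mul, mul_assoc, ← pow_succ J]
          refine sup_le le_sup_left (sup_le (le_sup_of_le_left (mul_mono_right ?_)) le_sup_right)
          rw [pow_succ]
          exact mul_mono_right le_sup_right

variable {A : Type*} [CommRing A]

theorem mem_map_mk_span_singleton_iff {π x : A} {J : Ideal A} :
    Quotient.mk (span {π}) x ∈ J.map (Quotient.mk (span {π})) ↔ ∃ z, x - π * z ∈ J := by
  rw [mem_quotient_iff_mem_sup, sup_comm, Submodule.mem_sup]
  constructor
  · rintro ⟨_, hp, y, hy, rfl⟩
    obtain ⟨z, rfl⟩ := mem_span_singleton'.mp hp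
    exact ⟨z, by rwa [mul_comm, add_sub_cancel_left]⟩
  · rintro ⟨z, hz⟩
    exact ⟨π * z, mem_span_singleton'.mpr ⟨z, mul_comm _ _⟩, _, hz, add_sub_cancel _ _⟩

theorem mem_pow_of_mul_mem_span_pair_pow_succ {π f x : A} (hπ : π ∈ nonZeroDivisors A)
    (hf : Quotient.mk (span {π}) f ∈ nonZeroDivisors (A ⧸ span {π})) {n : ℕ}
    (hx : π * x ∈ span {π, f} ^ (n + 1)) : x ∈ span {π, f} ^ n := by
  have hsplit := sup_pow_succ_le_mul_sup_pow (span {π}) (span {f}) n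
  rw [← span_insert, span_singleton_pow] at hsplit
  obtain ⟨_, hπu, _, hc, hsum⟩ := Submodule.mem_sup.mp (hsplit hx)
  obtain ⟨u, hu, rfl⟩ := mem_span_singleton_mul.mp hπu
  obtain ⟨c, rfl⟩ := mem_span_singleton'.mp hc
  have hcπ : c ∈ span {π} := by
    rw [← Quotient.eq_zero_iff_mem,
      ← mul_right_mem_nonZeroDivisors_eq_zero_iff (pow_mem hf (n + 1)), ← map_pow, ← map_mul,
      Quotient.eq_zero_iff_mem, mem_span_singleton']
    exact ⟨x - u, by linear_combination -hsum⟩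
  obtain ⟨d, rfl⟩ := mem_span_singleton'.mp hcπ
  have hx_eq : x = u + d * f ^ (n + 1) :=
    (mul_cancel_left_mem_nonZeroDivisors hπ).mp (by linear_combination -hsum)
  rw [hx_eq]
  exact add_mem hu (mul_mem_left _ _
    (pow_le_pow_right n.le_succ (pow_mem_pow (subset_span (by simp)) _)))

end Ideal

/-- Let `A` be an integral domain, `0 ≠ π ∈ A` such that `A/(π)` is an integral domain,
and `f ∈ A` with `f ∉ (π)`. Let `I = (π, f)` and let `Ī` be the image of `I` in
`Ā = A/(π)`. Then for every `n ≥ 1` the sequence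
`0 → I^(n-1)/Iⁿ → Iⁿ/I^(n+1) → Īⁿ/Ī^(n+1) → 0`
(first map induced by multiplication by `π`, second by reduction mod `(π)`) is exact.
Explicitly (elementwise): multiplication by `π` is well defined and injective on the
quotients, reduction is well defined and surjective, and the kernel of reduction
equals the image of multiplication by `π`. -/
theorem graded_pieces_exact_sequence
    {A : Type*} [CommRing A] [IsDomain A] (π f : A) (hπ : π ≠ 0)
    (hdom : IsDomain (A ⧸ Ideal.span ({π} : Set A)))
    (hf : f ∉ Ideal.span ({π} : Set A))
    (I : Ideal A) (hI : I = Ideal.span ({π, f} : Set A))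
    (Ibar : Ideal (A ⧸ Ideal.span ({π} : Set A)))
    (hIbar : Ibar = Ideal.map (Ideal.Quotient.mk (Ideal.span ({π} : Set A))) I) :
    ∀ n : ℕ, 1 ≤ n →
      -- multiplication by `π` sends `I^(n-1)` into `Iⁿ` (well defined on quotients) …
      (∀ x ∈ I ^ (n - 1), π * x ∈ I ^ n) ∧
      -- … and is injective on the quotients:
      (∀ x ∈ I ^ (n - 1), π * x ∈ I ^ (n + 1) → x ∈ I ^ n) ∧
      -- reduction mod `(π)` sends `Iⁿ` into `Īⁿ` (well defined on quotients) …
      (∀ x ∈ I ^ n, Ideal.Quotient.mk (Ideal.span ({π} : Set A)) x ∈ Ibar ^ n) ∧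
      -- … and is surjective onto `Īⁿ/Ī^(n+1)` (indeed onto `Īⁿ`):
      (∀ y ∈ Ibar ^ n, ∃ x ∈ I ^ n, Ideal.Quotient.mk (Ideal.span ({π} : Set A)) x = y) ∧
      -- kernel of reduction = image of multiplication by `π`:
      (∀ x ∈ I ^ n, (Ideal.Quotient.mk (Ideal.span ({π} : Set A)) x ∈ Ibar ^ (n + 1) ↔
        ∃ z ∈ I ^ (n - 1), x - π * z ∈ I ^ (n + 1))) := by
  have := hdom
  have hπI : π ∈ I := hI ▸ Ideal.subset_span (by simp)
  have hf' : Ideal.Quotient.mk (Ideal.span {π}) f ∈ nonZeroDivisors (A ⧸ Ideal.span {π}) :=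
    mem_nonZeroDivisors_of_ne_zero (by rwa [Ne, Ideal.Quotient.eq_zero_iff_mem])
  have cancel {k : ℕ} {x : A} (hx : π * x ∈ I ^ (k + 1)) : x ∈ I ^ k :=
    hI ▸ Ideal.mem_pow_of_mul_mem_span_pair_pow_succ (mem_nonZeroDivisors_of_ne_zero hπ) hf'
      (hI ▸ hx)
  intro n hn
  obtain ⟨m, rfl⟩ : ∃ m, n = m + 1 := ⟨n - 1, by omega⟩
  simp only [hIbar, ← Ideal.map_pow, Nat.add_sub_cancel]
  refine ⟨fun x hx ↦ pow_succ' I m ▸ Ideal.mul_mem_mul hπI hx, fun x _ hx ↦ cancel hx,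
    fun x hx ↦ Ideal.mem_map_of_mem _ hx,
    fun y hy ↦ (Ideal.mem_map_iff_of_surjective _ Ideal.Quotient.mk_surjective).mp hy,
    fun x hx ↦ ?_⟩
  rw [Ideal.mem_map_mk_span_singleton_iff]
  constructor
  · rintro ⟨z, hz⟩
    refine ⟨z, cancel ?_, hz⟩
    simpa using sub_mem hx (Ideal.pow_le_pow_right (m + 1).le_succ hz)
  · rintro ⟨z, -, hz⟩
    exact ⟨z, hz⟩
end
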